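/- arXiv:2207.11999 — 5 statements merged into one kernel-verified Lean document; each statement's English description precedes it below -/
import Mathlib

section
/- Let A be an additive category, let C = (X_•, d_•) and C′ be complexes in A, and let f : C → C′ be a morphism of complexes. If C is minimal and f becomes a split monomorphism in the homotopy category K(A), then f is a split monomorphism already in the category of complexes over A (i.e., there is a morphism of complexes g : C′ → C with g ∘ f = id_C on the nose). -/
open CategoryTheory CategoryTheory.Limits

universe w v u

/-- A morphism `f : X ⟶ Y` in a preadditive category lies in the *radical* if for every
object `Z` and all morphisms `a : Z ⟶ X`, `b : Y ⟶ Z`, the composite `a ≫ f ≫ b` lies in the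
Jacobson radical of the endomorphism ring `End Z`. -/
def CategoryTheory.InRadical {A : Type u} [Category.{v} A] [Preadditive A]
    {X Y : A} (f : X ⟶ Y) : Prop :=
  ∀ (Z : A) (a : Z ⟶ X) (b : Y ⟶ Z), (a ≫ f ≫ b : End Z) ∈ (⊥ : Ideal (End Z)).jacobson

/-- A cochain complex is *minimal* if all its differentials lie in the radical. -/
def CochainComplex.IsMinimal {A : Type u} [Category.{v} A] [Preadditive A]
    (K : CochainComplex A ℤ) : Prop :=
  ∀ i : ℤ, CategoryTheory.InRadical (K.d i (i + 1))

/-!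
A homotopy `f ≫ g' ≃ 𝟙 C` writes each component of `f ≫ g'` as `1 + x` with `x` a sum of
composites through differentials of `C`. When `C` is minimal these composites lie in the Jacobson
radical of `End (C.X i)`, so `f ≫ g'` is an isomorphism of complexes and `g' ≫ inv (f ≫ g')` is
an honest retraction of `f`.
-/

namespace Ideal

variable {R : Type*} [Ring R] {x : R}

theorem exists_mul_add_one_eq_one_of_mem_jacobson_bot (hx : x ∈ (⊥ : Ideal R).jacobson) :
    ∃ z, z * (x + 1) = 1 := by
  obtain ⟨z, hz⟩ := exists_mul_add_sub_mem_of_mem_jacobson x hx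
  exact ⟨z, sub_eq_zero.1 ((Submodule.mem_bot R).1 hz)⟩

/-- Noncommutative version of `Ideal.mem_jacobson_bot` (for `y = 1`). -/
theorem isUnit_add_one_of_mem_jacobson_bot (hx : x ∈ (⊥ : Ideal R).jacobson) :
    IsUnit (x + 1) := by
  obtain ⟨z, hz⟩ := exists_mul_add_one_eq_one_of_mem_jacobson_bot hx
  -- `z = -(z * x) + 1` with `-(z * x)` in the left ideal, so `z` has a left inverse as well.
  have hz_eq : -(z * x) + 1 = z := by rw [← hz]; noncomm_ring
  obtain ⟨w, hw⟩ := exists_mul_add_one_eq_one_of_mem_jacobson_bot (neg_mem (mul_mem_left _ z hx))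
  rw [hz_eq] at hw
  have hw_eq : w = x + 1 := left_inv_eq_right_inv hw hz
  exact ⟨⟨x + 1, z, hw_eq ▸ hw, hz⟩, rfl⟩

end Ideal

section

variable {A : Type u} [Category.{v} A] [Preadditive A]

theorem CategoryTheory.InRadical.zero (X Y : A) : InRadical (0 : X ⟶ Y) := by
  intro Z a b
  simpa only [Limits.zero_comp, Limits.comp_zero] using zero_mem _

theorem CochainComplex.IsMinimal.inRadical_d {K : CochainComplex A ℤ} (hK : K.IsMinimal)
    (i j : ℤ) : InRadical (K.d i j) := by
  by_cases hij : i + 1 = j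
  · subst hij
    exact hK i
  · rw [K.shape i j hij]
    exact InRadical.zero _ _

theorem Homotopy.isIso_of_forall_inRadical_d {ι : Type*} {c : ComplexShape ι}
    {K : HomologicalComplex A c} (hK : ∀ i j, InRadical (K.d i j)) {φ : K ⟶ K}
    (h : Homotopy φ (𝟙 K)) : IsIso φ := by
  have hφ : ∀ i, IsIso (φ.f i) := fun i => by
    have hnext := hK i (c.next i) (K.X i) (𝟙 _) (h.hom (c.next i) i)
    have hprev := hK (c.prev i) i (K.X i) (h.hom i (c.prev i)) (𝟙 _)
    rw [Category.id_comp] at hnext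
    rw [Category.comp_id] at hprev
    rw [← isUnit_iff_isIso, h.comm i]
    exact Ideal.isUnit_add_one_of_mem_jacobson_bot (add_mem hnext hprev)
  exact HomologicalComplex.Hom.isIso_of_components φ

end

/-- If `C` is a minimal complex and `f : C ⟶ C'` becomes a split monomorphism in the homotopy
category `K(A)`, then `f` is a split monomorphism already in the category of complexes. -/
theorem minimal_splitMono_of_homotopy_splitMono
    {A : Type u} [Category.{v} A] [Preadditive A]
    {C C' : CochainComplex A ℤ} (f : C ⟶ C') (hC : C.IsMinimal)
    (hsplit : IsSplitMono ((HomotopyCategory.quotient A (ComplexShape.up ℤ)).map f)) :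
    ∃ g : C' ⟶ C, f ≫ g = 𝟙 C := by
  obtain ⟨r⟩ := hsplit.exists_splitMono
  obtain ⟨g', hg'⟩ :=
    (HomotopyCategory.quotient A (ComplexShape.up ℤ)).map_surjective r.retraction
  have h : Homotopy (f ≫ g') (𝟙 C) := HomotopyCategory.homotopyOfEq _ _ (by
    rw [Functor.map_comp, hg', r.id, CategoryTheory.Functor.map_id])
  have : IsIso (f ≫ g') := h.isIso_of_forall_inRadical_d hC.inRadical_d
  exact ⟨g' ≫ inv (f ≫ g'), by rw [← Category.assoc, IsIso.hom_inv_id]⟩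
end

section
/- Let A be an additive category, let C and C′ = (X′_•, d′_•) be complexes in A, and let f : C → C′ be a morphism of complexes. If C′ is minimal and f becomes a split epimorphism in the homotopy category K(A), then f is a split epimorphism already in the category of complexes over A (i.e., there is a morphism of complexes g : C′ → C with f ∘ g = id_{C′} on the nose). -/
open CategoryTheory CategoryTheory.Limits

universe w v u

/-- In any (possibly noncommutative) ring, `1 + x` is a unit if `x` lies in the Jacobson
radical of the zero ideal. -/
lemma isUnit_one_add_of_mem_jacobson_bot {R : Type*} [Ring R] {x : R}
    (hx : x ∈ (⊥ : Ideal R).jacobson) : IsUnit (1 + x) := by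
  have key : ∀ y ∈ (⊥ : Ideal R).jacobson, ∃ z : R, z * (1 + y) = 1 := by
    intro y hy
    obtain ⟨z, hz⟩ := (Ideal.mem_jacobson_iff.mp hy) 1
    rw [Ideal.mem_bot, sub_eq_zero, mul_one] at hz
    refine ⟨z, ?_⟩
    rw [mul_add, mul_one, add_comm]
    exact hz
  obtain ⟨z, hz⟩ := key x hx
  have hz2 : z + z * x = 1 := by rw [mul_add, mul_one] at hz; exact hz
  have hz' : z = 1 + -(z * x) := by
    rw [← sub_eq_add_neg]
    exact eq_sub_of_add_eq hz2
  obtain ⟨w, hw⟩ := key (-(z * x))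
    (Submodule.neg_mem _ (Ideal.mul_mem_left _ z hx))
  rw [← hz'] at hw
  have hwz : w = 1 + x := by
    calc w = w * (z * (1 + x)) := by rw [hz, mul_one]
    _ = (w * z) * (1 + x) := by rw [mul_assoc]
    _ = 1 + x := by rw [hw, one_mul]
  exact ⟨⟨1 + x, z, by rw [← hwz]; exact hw, hz⟩, rfl⟩

/-- If `C'` is a minimal complex and `f : C ⟶ C'` becomes a split epimorphism in the homotopy
category `K(A)`, then `f` is a split epimorphism already in the category of complexes. -/
theorem minimal_splitEpi_of_homotopy_splitEpi
    {A : Type u} [Category.{v} A] [Preadditive A]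
    {C C' : CochainComplex A ℤ} (f : C ⟶ C') (hC' : C'.IsMinimal)
    (hsplit : IsSplitEpi ((HomotopyCategory.quotient A (ComplexShape.up ℤ)).map f)) :
    ∃ g : C' ⟶ C, g ≫ f = 𝟙 C' := by
  obtain ⟨g₀, hg₀⟩ :=
    (HomotopyCategory.quotient A (ComplexShape.up ℤ)).map_surjective
      hsplit.exists_splitEpi.some.section_
  set u : C' ⟶ C' := g₀ ≫ f with hu
  have hmapu : (HomotopyCategory.quotient A (ComplexShape.up ℤ)).map u =
      (HomotopyCategory.quotient A (ComplexShape.up ℤ)).map (𝟙 C') := by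
    rw [hu, CategoryTheory.Functor.map_comp, hg₀, CategoryTheory.Functor.map_id]
    exact hsplit.exists_splitEpi.some.id
  have h : Homotopy u (𝟙 C') := HomotopyCategory.homotopyOfEq _ _ hmapu
  -- each component of `u` is `1 +` (element of the Jacobson radical), hence invertible
  have hiso : ∀ i : ℤ, IsIso (u.f i) := by
    intro i
    have hrel : (ComplexShape.up ℤ).Rel (i - 1) (i - 1 + 1) := rfl
    have hrel' : (ComplexShape.up ℤ).Rel (i - 1) i := by
      simp [ComplexShape.up_Rel]
    have hd : dNext i h.hom = C'.d i (i + 1) ≫ h.hom (i + 1) i :=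
      dNext_eq h.hom rfl
    have hp : prevD i h.hom = h.hom i (i - 1) ≫ C'.d (i - 1) i :=
      prevD_eq h.hom hrel'
    have hdcast : C'.d (i - 1) (i - 1 + 1) ≫
        eqToHom (congr_arg C'.X ((ComplexShape.up ℤ).next_eq hrel hrel')) = C'.d (i - 1) i :=
      HomologicalComplex.d_comp_eqToHom C' hrel' hrel
    have hmem1 : (C'.d i (i + 1) ≫ h.hom (i + 1) i : End (C'.X i)) ∈
        (⊥ : Ideal (End (C'.X i))).jacobson := by
      have := hC' i (C'.X i) (𝟙 _) (h.hom (i + 1) i)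
      simpa using this
    have hmem2 : (h.hom i (i - 1) ≫ C'.d (i - 1) i : End (C'.X i)) ∈
        (⊥ : Ideal (End (C'.X i))).jacobson := by
      have := hC' (i - 1) (C'.X i) (h.hom i (i - 1))
        (eqToHom (congr_arg C'.X ((ComplexShape.up ℤ).next_eq hrel hrel')))
      rw [← hdcast]
      simpa using this
    set x : End (C'.X i) :=
      (C'.d i (i + 1) ≫ h.hom (i + 1) i) + (h.hom i (i - 1) ≫ C'.d (i - 1) i) with hx
    have hmem : x ∈ (⊥ : Ideal (End (C'.X i))).jacobson :=
      Ideal.add_mem ((⊥ : Ideal (End (C'.X i))).jacobson) hmem1 hmem2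
    have hunit : IsUnit ((1 : End (C'.X i)) + x) :=
      isUnit_one_add_of_mem_jacobson_bot hmem
    have heq : u.f i = (1 : End (C'.X i)) + x := by
      have comm := h.comm i
      rw [hd, hp] at comm
      rw [comm, hx]
      show _ + 𝟙 (C'.X i) = 𝟙 (C'.X i) + _
      abel
    rw [heq]
    obtain ⟨v, hv⟩ := hunit
    refine ⟨v.inv, ?_, ?_⟩
    · show (v.inv * ((1 : End (C'.X i)) + x) : End (C'.X i)) = 1
      rw [← hv]
      exact v.inv_val
    · show ((1 : End (C'.X i)) + x) * v.inv = (1 : End (C'.X i))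
      rw [← hv]
      exact v.val_inv
  haveI : ∀ n : ℤ, IsIso (u.f n) := hiso
  haveI : IsIso u := HomologicalComplex.Hom.isIso_of_components u
  refine ⟨inv u ≫ g₀, ?_⟩
  rw [Category.assoc, ← hu, IsIso.inv_hom_id]
end

section
/- Let C and C′ be minimal complexes over an additive category A and let f : C → C′ be a morphism of complexes. If f becomes an isomorphism in the homotopy category K(A) (i.e., f is a homotopy equivalence), then f is an isomorphism in the category of complexes over A. -/
open CategoryTheory CategoryTheory.Limits

universe w v u

/-- If `x` is in the Jacobson radical, `1 - x` has a left inverse. -/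
lemma exists_left_inv_one_sub_of_mem_jacobson_bot {R : Type*} [Ring R] {x : R}
    (hx : x ∈ (⊥ : Ideal R).jacobson) : ∃ z : R, z * (1 - x) = 1 := by
  obtain ⟨z, hz⟩ := Ideal.mem_jacobson_iff.1 hx (-1)
  rw [Ideal.mem_bot] at hz
  refine ⟨z, ?_⟩
  have e : z * (-1) * x + z - 1 = z * (1 - x) - 1 := by noncomm_ring
  rw [e, sub_eq_zero] at hz
  exact hz

/-- If `x` is in the Jacobson radical, `1 - x` is a unit (noncommutative version). -/
lemma isUnit_one_sub_of_mem_jacobson_bot {R : Type*} [Ring R] {x : R}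
    (hx : x ∈ (⊥ : Ideal R).jacobson) : IsUnit (1 - x) := by
  obtain ⟨z, hz⟩ := exists_left_inv_one_sub_of_mem_jacobson_bot hx
  have hzx : -(z * x) ∈ (⊥ : Ideal R).jacobson :=
    neg_mem (Ideal.mul_mem_left _ z hx)
  obtain ⟨w, hw⟩ := exists_left_inv_one_sub_of_mem_jacobson_bot hzx
  have hz2 : 1 - -(z * x) = z := by
    have : z * (1 - x) = z - z * x := by noncomm_ring
    rw [this] at hz
    -- hz : z - z * x = 1
    have := hz
    calc 1 - -(z * x) = 1 + z * x := by rw [sub_neg_eq_add]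
      _ = (z - z * x) + z * x := by rw [hz]
      _ = z := by noncomm_ring
  rw [hz2] at hw
  -- hw : w * z = 1
  have hwe : w = 1 - x := by
    calc w = w * (z * (1 - x)) := by rw [hz, mul_one]
      _ = (w * z) * (1 - x) := by rw [mul_assoc]
      _ = 1 - x := by rw [hw, one_mul]
  exact ⟨⟨1 - x, z, by rw [← hwe]; exact hw, hz⟩, rfl⟩

/-- A self-map of a minimal complex homotopic to the identity is an isomorphism. -/
lemma isIso_of_homotopy_id {A : Type u} [Category.{v} A] [Preadditive A]
    {D : CochainComplex A ℤ} (hD : D.IsMinimal) (φ : D ⟶ D)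
    (h : Homotopy φ (𝟙 D)) : IsIso φ := by
  have hiso : ∀ i : ℤ, IsIso (φ.f i) := by
    intro i
    have comm := h.comm i
    rw [dNext_eq h.hom (show (ComplexShape.up ℤ).Rel i (i + 1) from rfl),
        prevD_eq h.hom (show (ComplexShape.up ℤ).Rel (i - 1) i by simp [ComplexShape.up])] at comm
    simp only [HomologicalComplex.id_f] at comm
    have m1 := hD i (D.X i) (𝟙 (D.X i)) (h.hom (i + 1) i)
    rw [Category.id_comp] at m1
    have hd := hD (i - 1)
    rw [show (i - 1 + 1 : ℤ) = i by ring] at hd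
    have m2 := hd (D.X i) (h.hom i (i - 1)) (𝟙 (D.X i))
    rw [Category.comp_id] at m2
    let e1 : End (D.X i) := D.d i (i + 1) ≫ h.hom (i + 1) i
    let e2 : End (D.X i) := h.hom i (i - 1) ≫ D.d (i - 1) i
    let eφ : End (D.X i) := φ.f i
    have commE : eφ = e1 + e2 + 1 := comm
    have mu : 1 - eφ ∈ (⊥ : Ideal (End (D.X i))).jacobson := by
      have e : 1 - eφ = -e1 + -e2 := by rw [commE]; abel
      rw [e]
      exact add_mem (neg_mem m1) (neg_mem m2)
    have hu := isUnit_one_sub_of_mem_jacobson_bot mu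
    rw [sub_sub_cancel] at hu
    exact (isUnit_iff_isIso (φ.f i)).1 hu
  exact @HomologicalComplex.Hom.isIso_of_components _ _ _ _ _ _ _ φ hiso

/-- If `C` and `C'` are minimal complexes and `f : C ⟶ C'` becomes an isomorphism in the
homotopy category `K(A)` (i.e. `f` is a homotopy equivalence), then `f` is an isomorphism in
the category of complexes. -/
theorem minimal_isIso_of_homotopy_isIso
    {A : Type u} [Category.{v} A] [Preadditive A]
    {C C' : CochainComplex A ℤ} (f : C ⟶ C') (hC : C.IsMinimal) (hC' : C'.IsMinimal)
    (hiso : IsIso ((HomotopyCategory.quotient A (ComplexShape.up ℤ)).map f)) :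
    IsIso f := by
  obtain ⟨g, hg⟩ := (HomotopyCategory.quotient A (ComplexShape.up ℤ)).map_surjective
    (inv ((HomotopyCategory.quotient A (ComplexShape.up ℤ)).map f))
  have h1 : Homotopy (f ≫ g) (𝟙 C) :=
    HomotopyCategory.homotopyOfEq _ _ (by simp [hg])
  have h2 : Homotopy (g ≫ f) (𝟙 C') :=
    HomotopyCategory.homotopyOfEq _ _ (by simp [hg])
  have hfg : IsIso (f ≫ g) := isIso_of_homotopy_id hC _ h1
  have hgf : IsIso (g ≫ f) := isIso_of_homotopy_id hC' _ h2
  have hr : f ≫ (g ≫ inv (f ≫ g)) = 𝟙 C := by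
    rw [← Category.assoc, IsIso.hom_inv_id]
  have heq : g ≫ inv (f ≫ g) = inv (g ≫ f) ≫ g := by
    calc g ≫ inv (f ≫ g)
        = (inv (g ≫ f) ≫ (g ≫ f)) ≫ g ≫ inv (f ≫ g) := by
          rw [IsIso.inv_hom_id, Category.id_comp]
      _ = inv (g ≫ f) ≫ g ≫ ((f ≫ g) ≫ inv (f ≫ g)) := by
          simp only [Category.assoc]
      _ = inv (g ≫ f) ≫ g := by rw [IsIso.hom_inv_id, Category.comp_id]
  have hl : (g ≫ inv (f ≫ g)) ≫ f = 𝟙 C' := by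
    rw [heq, Category.assoc, IsIso.inv_hom_id]
  exact ⟨⟨g ≫ inv (f ≫ g), hr, hl⟩⟩
end

section
/- Let A be a Krull–Schmidt category, let X and Y be objects of A and let f ∈ Hom_A(X, Y). Then the following are equivalent: (1) f ∈ rad_A(X, Y); (2) no isomorphism between non-zero objects of A factors through f (i.e., there are no non-zero object pairs C, D, morphisms a : C → X, b : Y → D and isomorphism g : C → D with g = b ∘ f ∘ a); (3) no isomorphism between indecomposable objects of A factors through f. -/
open CategoryTheory CategoryTheory.Limits

universe w v u

attribute [local instance] CategoryTheory.Limits.hasBinaryBiproducts_of_finite_biproducts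

/-- A preadditive category with finite biproducts is *Krull–Schmidt* if every object is
isomorphic to a finite biproduct of objects whose endomorphism rings are local. -/
def CategoryTheory.IsKrullSchmidt (A : Type u) [Category.{v} A] [Preadditive A]
    [HasFiniteBiproducts A] : Prop :=
  ∀ X : A, ∃ (n : ℕ) (Y : Fin n → A),
    Nonempty (X ≅ ⨁ Y) ∧ ∀ i, IsLocalRing (End (Y i))

namespace KSAux

variable {A : Type u} [Category.{v} A] [Preadditive A]

lemma isZero_of_id_mem_jacobson {Z : A}
    (h : (𝟙 Z : End Z) ∈ (⊥ : Ideal (End Z)).jacobson) : IsZero Z := by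
  have h1 : (1 : End Z) ∈ (⊥ : Ideal (End Z)).jacobson := h
  have htop : (⊥ : Ideal (End Z)).jacobson = ⊤ := (Ideal.eq_top_iff_one _).mpr h1
  have hb : (⊥ : Ideal (End Z)) = ⊤ := Ideal.jacobson_eq_top_iff.mp htop
  have h0 : (1 : End Z) ∈ (⊥ : Ideal (End Z)) := (Ideal.eq_top_iff_one _).mp hb
  rw [IsZero.iff_id_eq_zero]
  simpa using Ideal.mem_bot.mp h0

lemma isZero_right_of_isUnit [HasBinaryBiproducts A] {W P Q : A} (φ : W ≅ P ⊞ Q)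
    (hu : IsUnit (End.of (φ.hom ≫ biprod.fst ≫ biprod.inl ≫ φ.inv))) : IsZero Q := by
  set e : W ⟶ W := φ.hom ≫ biprod.fst ≫ biprod.inl ≫ φ.inv with he
  have hiso : IsIso e := (isUnit_iff_isIso _).mp hu
  have hidem : e ≫ e = e := by simp [he]
  have he1 : e = 𝟙 W := by
    have := hidem
    rw [show e = e ≫ 𝟙 W by simp] at this
    exact (cancel_epi e).mp (by simpa using this)
  have hfi : biprod.fst ≫ biprod.inl = 𝟙 (P ⊞ Q) := by
    have := congrArg (fun t => φ.inv ≫ t ≫ φ.hom) he1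
    simpa [he] using this
  rw [IsZero.iff_id_eq_zero]
  calc 𝟙 Q = biprod.inr ≫ 𝟙 (P ⊞ Q) ≫ biprod.snd := by simp
    _ = biprod.inr ≫ (biprod.fst ≫ biprod.inl) ≫ biprod.snd := by rw [hfi]
    _ = 0 := by simp

lemma indecomposable_of_local [HasBinaryBiproducts A] {W : A} (h : IsLocalRing (End W)) :
    Indecomposable W := by
  constructor
  · intro hz
    have h0 : (1 : End W) = 0 := by
      have := hz.eq_of_src (𝟙 W) 0
      simpa using this
    exact one_ne_zero h0
  · intro P Q φ
    set e : End W := End.of (φ.hom ≫ biprod.fst ≫ biprod.inl ≫ φ.inv) with he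
    rcases IsLocalRing.isUnit_or_isUnit_of_add_one (a := e) (b := 1 - e) (by abel) with hu | hu
    · exact Or.inr (isZero_right_of_isUnit φ hu)
    · refine Or.inl (isZero_right_of_isUnit (φ ≪≫ biprod.braiding P Q) ?_)
      have hc : (φ ≪≫ biprod.braiding P Q).hom ≫ biprod.fst ≫ biprod.inl ≫
          (φ ≪≫ biprod.braiding P Q).inv
          = (1 : End W) - e := by
        have htot : (biprod.fst ≫ biprod.inl : P ⊞ Q ⟶ P ⊞ Q) + biprod.snd ≫ biprod.inr
            = 𝟙 (P ⊞ Q) := biprod.total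
        have h3 : φ.hom ≫ biprod.snd ≫ biprod.inr ≫ φ.inv
            = 𝟙 W - φ.hom ≫ biprod.fst ≫ biprod.inl ≫ φ.inv := by
          have := congrArg (fun t => φ.hom ≫ t ≫ φ.inv) htot
          simp only [Preadditive.add_comp, Preadditive.comp_add, Category.assoc] at this
          calc φ.hom ≫ biprod.snd ≫ biprod.inr ≫ φ.inv
              = (φ.hom ≫ biprod.fst ≫ biprod.inl ≫ φ.inv +
                  φ.hom ≫ biprod.snd ≫ biprod.inr ≫ φ.inv)
                - φ.hom ≫ biprod.fst ≫ biprod.inl ≫ φ.inv := by abel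
            _ = _ := by rw [this]; simp
        have h2 : (biprod.inl : Q ⟶ Q ⊞ P) ≫ biprod.lift biprod.snd biprod.fst
            = (biprod.inr : Q ⟶ P ⊞ Q) := by ext <;> simp
        simpa [he, End.of, biprod.braiding, reassoc_of% h2] using h3
      rw [hc]
      simpa using hu

lemma gaussian_eq [HasBinaryBiproducts A] {X₁ X₂ Y₁ Y₂ : A} (f₁₁ : X₁ ⟶ Y₁) (f₁₂ : X₁ ⟶ Y₂)
    (f₂₁ : X₂ ⟶ Y₁) (f₂₂ : X₂ ⟶ Y₂) [IsIso f₁₁] :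
    (Biprod.unipotentLower (-f₂₁ ≫ inv f₁₁)).hom ≫ Biprod.ofComponents f₁₁ f₁₂ f₂₁ f₂₂ ≫
      (Biprod.unipotentUpper (-inv f₁₁ ≫ f₁₂)).hom =
      biprod.map f₁₁ (f₂₂ - f₂₁ ≫ inv f₁₁ ≫ f₁₂) := by
  ext <;> simp
  abel

lemma isIso_biprod_map [HasBinaryBiproducts A] {P Q R S : A} (f : P ⟶ R) (g : Q ⟶ S)
    [IsIso f] [IsIso g] : IsIso (biprod.map f g) := by
  refine ⟨⟨biprod.map (inv f) (inv g), ?_, ?_⟩⟩ <;> ext <;> simp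

lemma isIso_of_components [HasBinaryBiproducts A] {X₁ X₂ : A} (M : X₁ ⊞ X₂ ⟶ X₁ ⊞ X₂)
    [IsIso (biprod.inl ≫ M ≫ biprod.fst)]
    (h : IsIso ((biprod.inr ≫ M ≫ biprod.snd) -
        (biprod.inr ≫ M ≫ biprod.fst) ≫ inv (biprod.inl ≫ M ≫ biprod.fst) ≫
          (biprod.inl ≫ M ≫ biprod.snd))) :
    IsIso M := by
  have w := gaussian_eq (biprod.inl ≫ M ≫ biprod.fst) (biprod.inl ≫ M ≫ biprod.snd)
    (biprod.inr ≫ M ≫ biprod.fst) (biprod.inr ≫ M ≫ biprod.snd)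
  rw [Biprod.ofComponents_eq M] at w
  haveI : IsIso (biprod.map (biprod.inl ≫ M ≫ biprod.fst)
      ((biprod.inr ≫ M ≫ biprod.snd) -
        (biprod.inr ≫ M ≫ biprod.fst) ≫ inv (biprod.inl ≫ M ≫ biprod.fst) ≫
          (biprod.inl ≫ M ≫ biprod.snd))) := by
    exact isIso_biprod_map _ _
  haveI h1 : IsIso ((Biprod.unipotentLower
        (-(biprod.inr ≫ M ≫ biprod.fst) ≫ inv (biprod.inl ≫ M ≫ biprod.fst))).hom ≫
      M ≫ (Biprod.unipotentUpper (-inv (biprod.inl ≫ M ≫ biprod.fst) ≫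
        (biprod.inl ≫ M ≫ biprod.snd))).hom) := by
    rw [w]; infer_instance
  haveI h2 : IsIso (M ≫ (Biprod.unipotentUpper (-inv (biprod.inl ≫ M ≫ biprod.fst) ≫
      (biprod.inl ≫ M ≫ biprod.snd))).hom) :=
    IsIso.of_isIso_comp_left (Biprod.unipotentLower
        (-(biprod.inr ≫ M ≫ biprod.fst) ≫ inv (biprod.inl ≫ M ≫ biprod.fst))).hom _
  exact IsIso.of_isIso_comp_right M (Biprod.unipotentUpper (-inv (biprod.inl ≫ M ≫ biprod.fst) ≫
      (biprod.inl ≫ M ≫ biprod.snd))).hom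

/-- The biproduct over `Fin (n + 1)` splits off its first summand. -/
noncomputable def biproductSuccIso [HasFiniteBiproducts A] (n : ℕ) (W : Fin (n + 1) → A) :
    (⨁ W) ≅ W 0 ⊞ ⨁ (fun i : Fin n => W i.succ) where
  hom := biprod.lift (biproduct.π W 0) (biproduct.lift fun i => biproduct.π W i.succ)
  inv := biprod.desc (biproduct.ι W 0) (biproduct.desc fun i => biproduct.ι W i.succ)
  hom_inv_id := by
    rw [biprod.lift_desc, biproduct.lift_desc, ← biproduct.total, Fin.sum_univ_succ]
  inv_hom_id := by
    ext j
    · simp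
    · simp [biproduct.ι_π]
      exact fun h => (Fin.succ_ne_zero _ h.symm).elim
    · simp [biproduct.ι_π, Fin.succ_ne_zero]
    · simp [biproduct.ι_π]

lemma core [HasFiniteBiproducts A] {X Y : A} (f : X ⟶ Y)
    (H : ∀ (C D : A), IsLocalRing (End C) → IsLocalRing (End D) →
      ∀ (c : C ⟶ X) (d : Y ⟶ D), ¬ IsIso (c ≫ f ≫ d)) :
    ∀ (n : ℕ) (W : Fin n → A), (∀ i, IsLocalRing (End (W i))) →
      ∀ (a : (⨁ W) ⟶ X) (b : Y ⟶ ⨁ W), IsIso (𝟙 (⨁ W) + a ≫ f ≫ b) := by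
  intro n
  induction n with
  | zero =>
    intro W hW a b
    have hz : IsZero (⨁ W) := by
      rw [IsZero.iff_id_eq_zero, ← biproduct.total]
      simp
    rw [hz.eq_of_src (𝟙 (⨁ W) + a ≫ f ≫ b) (𝟙 (⨁ W))]
    infer_instance
  | succ n ih =>
    intro W hW a b
    set σ := biproductSuccIso n W with hσ
    suffices h : IsIso (σ.inv ≫ (𝟙 (⨁ W) + a ≫ f ≫ b) ≫ σ.hom) by
      have e : 𝟙 (⨁ W) + a ≫ f ≫ b
          = σ.hom ≫ (σ.inv ≫ (𝟙 (⨁ W) + a ≫ f ≫ b) ≫ σ.hom) ≫ σ.inv := by simp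
      rw [e]; infer_instance
    have e2 : σ.inv ≫ (𝟙 (⨁ W) + a ≫ f ≫ b) ≫ σ.hom
        = 𝟙 (W 0 ⊞ ⨁ fun i : Fin n => W i.succ) + (σ.inv ≫ a) ≫ f ≫ (b ≫ σ.hom) := by
      simp [Preadditive.comp_add, Preadditive.add_comp]
    rw [e2]
    set a' : (W 0 ⊞ ⨁ fun i : Fin n => W i.succ) ⟶ X := σ.inv ≫ a with ha'
    set b' : Y ⟶ (W 0 ⊞ ⨁ fun i : Fin n => W i.succ) := b ≫ σ.hom with hb'
    set M : (W 0 ⊞ ⨁ fun i : Fin n => W i.succ) ⟶ (W 0 ⊞ ⨁ fun i : Fin n => W i.succ)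
      := 𝟙 (W 0 ⊞ ⨁ fun i : Fin n => W i.succ) + a' ≫ f ≫ b' with hMdef
    have e11 : biprod.inl ≫ M ≫ biprod.fst
        = 𝟙 (W 0) + (biprod.inl ≫ a') ≫ f ≫ (b' ≫ biprod.fst) := by
      simp [hMdef, Preadditive.comp_add, Preadditive.add_comp]
    haveI hloc := hW 0
    haveI h11 : IsIso (biprod.inl ≫ M ≫ biprod.fst) := by
      rw [e11]
      have hnu : ¬ IsUnit (End.of ((biprod.inl ≫ a') ≫ f ≫ (b' ≫ biprod.fst))) := by
        intro hu
        exact H (W 0) (W 0) (hW 0) (hW 0) (biprod.inl ≫ a') (b' ≫ biprod.fst)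
          ((isUnit_iff_isIso _).mp hu)
      have halt := IsLocalRing.isUnit_or_isUnit_of_add_one
        (a := -(End.of ((biprod.inl ≫ a') ≫ f ≫ (b' ≫ biprod.fst))))
        (b := 1 + End.of ((biprod.inl ≫ a') ≫ f ≫ (b' ≫ biprod.fst))) (by abel)
      have hu2 : IsUnit (1 + End.of ((biprod.inl ≫ a') ≫ f ≫ (b' ≫ biprod.fst))) := by
        rcases halt with h1 | h1
        · exact absurd (by simpa using h1.neg) hnu
        · exact h1
      exact (isUnit_iff_isIso _).mp hu2
    apply isIso_of_components
    have eS : (biprod.inr ≫ M ≫ biprod.snd) -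
        (biprod.inr ≫ M ≫ biprod.fst) ≫ inv (biprod.inl ≫ M ≫ biprod.fst) ≫
          (biprod.inl ≫ M ≫ biprod.snd)
        = 𝟙 (⨁ fun i : Fin n => W i.succ) + (biprod.inr ≫ a') ≫ f ≫
            (b' ≫ biprod.snd - b' ≫ biprod.fst ≫ inv (biprod.inl ≫ M ≫ biprod.fst) ≫
              biprod.inl ≫ a' ≫ f ≫ b' ≫ biprod.snd) := by
      simp [hMdef, Preadditive.comp_add, Preadditive.add_comp, Preadditive.comp_sub,
        Preadditive.sub_comp]
      abel
    rw [eS]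
    exact ih (fun i => W i.succ) (fun i => hW i.succ) _ _

lemma inRadical_of_H [HasFiniteBiproducts A] (hKS : CategoryTheory.IsKrullSchmidt A)
    {X Y : A} (f : X ⟶ Y)
    (H : ∀ (C D : A), IsLocalRing (End C) → IsLocalRing (End D) →
      ∀ (c : C ⟶ X) (d : Y ⟶ D), ¬ IsIso (c ≫ f ≫ d)) :
    CategoryTheory.InRadical f := by
  have key : ∀ (Z : A) (a : Z ⟶ X) (b : Y ⟶ Z), IsIso (𝟙 Z + a ≫ f ≫ b) := by
    intro Z a b
    obtain ⟨n, W, ⟨φ⟩, hloc⟩ := hKS Z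
    haveI h := core f H n W hloc (φ.inv ≫ a) (b ≫ φ.hom)
    have e : 𝟙 Z + a ≫ f ≫ b
        = φ.hom ≫ (𝟙 (⨁ W) + (φ.inv ≫ a) ≫ f ≫ (b ≫ φ.hom)) ≫ φ.inv := by
      simp [Preadditive.comp_add, Preadditive.add_comp]
    rw [e]; infer_instance
  intro Z a b
  show End.of (a ≫ f ≫ b) ∈ (⊥ : Ideal (End Z)).jacobson
  refine Ideal.mem_jacobson_iff.mpr fun y => ?_
  haveI := key Z a (b ≫ y)
  refine ⟨End.of (inv (𝟙 Z + a ≫ f ≫ (b ≫ y))), ?_⟩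
  refine Ideal.mem_bot.mpr (sub_eq_zero.mpr ?_)
  show (a ≫ f ≫ b) ≫ y ≫ inv (𝟙 Z + a ≫ f ≫ (b ≫ y))
      + inv (𝟙 Z + a ≫ f ≫ (b ≫ y)) = 𝟙 Z
  have hcomp : (𝟙 Z + a ≫ f ≫ (b ≫ y)) ≫ inv (𝟙 Z + a ≫ f ≫ (b ≫ y)) = 𝟙 Z :=
    IsIso.hom_inv_id _
  calc (a ≫ f ≫ b) ≫ y ≫ inv (𝟙 Z + a ≫ f ≫ (b ≫ y))
        + inv (𝟙 Z + a ≫ f ≫ (b ≫ y))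
      = (𝟙 Z + a ≫ f ≫ (b ≫ y)) ≫ inv (𝟙 Z + a ≫ f ≫ (b ≫ y)) := by
        rw [Preadditive.add_comp]
        simp [add_comm]
    _ = 𝟙 Z := hcomp

end KSAux

/-- In a Krull–Schmidt category, a morphism `f` lies in the radical iff no isomorphism between
non-zero objects factors through `f`, iff no isomorphism between indecomposable objects factors
through `f`. -/
theorem inRadical_tfae
    {A : Type u} [Category.{v} A] [Preadditive A] [HasFiniteBiproducts A]
    (hKS : CategoryTheory.IsKrullSchmidt A) {X Y : A} (f : X ⟶ Y) :
    List.TFAE [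
      CategoryTheory.InRadical f,
      ¬ ∃ (C D : A) (a : C ⟶ X) (b : Y ⟶ D),
          ¬ IsZero C ∧ ¬ IsZero D ∧ IsIso (a ≫ f ≫ b),
      ¬ ∃ (C D : A) (a : C ⟶ X) (b : Y ⟶ D),
          Indecomposable C ∧ Indecomposable D ∧ IsIso (a ≫ f ≫ b)] := by
  tfae_have 1 → 2 := by
    intro h1
    rintro ⟨C, D, a, b, hC, hD, hiso⟩
    have e : (a ≫ f ≫ (b ≫ inv (a ≫ f ≫ b)) : End C) = 𝟙 C := by
      have h0 := IsIso.hom_inv_id (a ≫ f ≫ b)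
      simpa only [Category.assoc] using h0
    have h := h1 C a (b ≫ inv (a ≫ f ≫ b))
    rw [e] at h
    exact hC (KSAux.isZero_of_id_mem_jacobson h)
  tfae_have 2 → 3 := by
    intro h2
    rintro ⟨C, D, a, b, hC, hD, hiso⟩
    exact h2 ⟨C, D, a, b, hC.1, hD.1, hiso⟩
  tfae_have 3 → 1 := by
    intro h3
    refine KSAux.inRadical_of_H hKS f ?_
    intro C D hC hD c d hiso
    exact h3 ⟨C, D, c, d, KSAux.indecomposable_of_local hC,
      KSAux.indecomposable_of_local hD, hiso⟩
  tfae_finish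
end

section
/- Let C be an abelian category, let (∇_λ)_{λ∈Λ} be a family of objects of C, and let 0 → A → B → C → 0 be a short exact sequence of non-zero objects of C. Assume that for each X ∈ {A, B, C} the set E_X = { d ∈ ℕ : Ext^d(X, ∇_λ) ≠ 0 for some λ ∈ Λ } is non-empty and bounded above, and let a, b, c denote the maxima of E_A, E_B, E_C respectively. Then: (1) a ≤ max(b, c−1) (with the maximum taken in ℤ, so if c = 0 this reads a ≤ b), with equality if b ≠ c; (2) b ≤ max(a, c), with equality if c ≠ a+1; (3) c ≤ max(b, a+1), with equality if a ≠ b. -/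
open CategoryTheory CategoryTheory.Limits CategoryTheory.Abelian

universe w v u

section DFDAux

variable {C : Type u} [Category.{v} C] [Abelian C] [HasExt.{w} C]
  {S : ShortComplex C} {Y : C}

-- A
lemma dfd_lemA (hS : S.ShortExact) (Y : C) (n : ℕ) (h3 : Subsingleton (Ext S.X₃ Y n))
    (h1 : Subsingleton (Ext S.X₁ Y n)) : Subsingleton (Ext S.X₂ Y n) := by
  refine subsingleton_of_forall_eq 0 fun z => ?_
  obtain ⟨x₃, hx₃⟩ := Ext.contravariant_sequence_exact₂ hS Y z (Subsingleton.elim _ _)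
  rw [← hx₃, Subsingleton.elim x₃ 0, Ext.comp_zero]

-- B
lemma dfd_lemB (hS : S.ShortExact) (Y : C) (n : ℕ) (h1 : Subsingleton (Ext S.X₁ Y n))
    (h2 : Nontrivial (Ext S.X₂ Y n)) : Nontrivial (Ext S.X₃ Y n) := by
  obtain ⟨z, hz⟩ := (nontrivial_iff_exists_ne 0).1 h2
  obtain ⟨x₃, hx₃⟩ := Ext.contravariant_sequence_exact₂ hS Y z (Subsingleton.elim _ _)
  exact (nontrivial_iff_exists_ne 0).2 ⟨x₃, fun h => hz (by rw [← hx₃, h, Ext.comp_zero])⟩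

-- C
lemma dfd_lemC (hS : S.ShortExact) (Y : C) (n : ℕ) (h3 : Subsingleton (Ext S.X₃ Y n))
    (h2 : Nontrivial (Ext S.X₂ Y n)) : Nontrivial (Ext S.X₁ Y n) := by
  obtain ⟨z, hz⟩ := (nontrivial_iff_exists_ne 0).1 h2
  refine (nontrivial_iff_exists_ne 0).2 ⟨(Ext.mk₀ S.f).comp z (zero_add n), fun h => hz ?_⟩
  obtain ⟨x₃, hx₃⟩ := Ext.contravariant_sequence_exact₂ hS Y z h
  rw [← hx₃, Subsingleton.elim x₃ 0, Ext.comp_zero]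

-- D
lemma dfd_lemD (hS : S.ShortExact) (Y : C) (n₀ n₁ : ℕ) (hn : 1 + n₀ = n₁) (h2 : Subsingleton (Ext S.X₂ Y n₀))
    (h1 : Nontrivial (Ext S.X₁ Y n₀)) : Nontrivial (Ext S.X₃ Y n₁) := by
  obtain ⟨z, hz⟩ := (nontrivial_iff_exists_ne 0).1 h1
  refine (nontrivial_iff_exists_ne 0).2 ⟨hS.extClass.comp z hn, fun h => hz ?_⟩
  obtain ⟨x₂, hx₂⟩ := Ext.contravariant_sequence_exact₁ hS Y z hn h
  rw [← hx₂, Subsingleton.elim x₂ 0, Ext.comp_zero]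

-- E
lemma dfd_lemE (hS : S.ShortExact) (Y : C) (n₀ n₁ : ℕ) (hn : 1 + n₀ = n₁) (h3 : Subsingleton (Ext S.X₃ Y n₁))
    (h1 : Nontrivial (Ext S.X₁ Y n₀)) : Nontrivial (Ext S.X₂ Y n₀) := by
  obtain ⟨z, hz⟩ := (nontrivial_iff_exists_ne 0).1 h1
  obtain ⟨x₂, hx₂⟩ := Ext.contravariant_sequence_exact₁ hS Y z hn (Subsingleton.elim _ _)
  exact (nontrivial_iff_exists_ne 0).2 ⟨x₂, fun h => hz (by rw [← hx₂, h, Ext.comp_zero])⟩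

-- F
lemma dfd_lemF (hS : S.ShortExact) (Y : C) (n₀ n₁ : ℕ) (hn : 1 + n₀ = n₁) (h2 : Subsingleton (Ext S.X₂ Y n₁))
    (h3 : Nontrivial (Ext S.X₃ Y n₁)) : Nontrivial (Ext S.X₁ Y n₀) := by
  obtain ⟨z, hz⟩ := (nontrivial_iff_exists_ne 0).1 h3
  obtain ⟨x₁, hx₁⟩ := Ext.contravariant_sequence_exact₃ hS Y z (Subsingleton.elim _ _) hn
  exact (nontrivial_iff_exists_ne 0).2 ⟨x₁, fun h => hz (by rw [← hx₁, h, Ext.comp_zero])⟩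

-- G
lemma dfd_lemG (hS : S.ShortExact) (Y : C) (n₀ n₁ : ℕ) (hn : 1 + n₀ = n₁) (h1 : Subsingleton (Ext S.X₁ Y n₀))
    (h3 : Nontrivial (Ext S.X₃ Y n₁)) : Nontrivial (Ext S.X₂ Y n₁) := by
  obtain ⟨z, hz⟩ := (nontrivial_iff_exists_ne 0).1 h3
  refine (nontrivial_iff_exists_ne 0).2 ⟨(Ext.mk₀ S.g).comp z (zero_add n₁), fun h => hz ?_⟩
  obtain ⟨x₁, hx₁⟩ := Ext.contravariant_sequence_exact₃ hS Y z h hn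
  rw [← hx₁, Subsingleton.elim x₁ 0, Ext.comp_zero]

-- H
lemma dfd_lemH (hS : S.ShortExact) (Y : C) (n₀ n₁ : ℕ) (hn : 1 + n₀ = n₁) (h1 : Subsingleton (Ext S.X₁ Y n₀))
    (h2 : Subsingleton (Ext S.X₂ Y n₁)) : Subsingleton (Ext S.X₃ Y n₁) := by
  refine subsingleton_of_forall_eq 0 fun z => ?_
  obtain ⟨x₁, hx₁⟩ := Ext.contravariant_sequence_exact₃ hS Y z (Subsingleton.elim _ _) hn
  rw [← hx₁, Subsingleton.elim x₁ 0, Ext.comp_zero]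

-- I
lemma dfd_lemI (hS : S.ShortExact) (Y : C) (n₀ n₁ : ℕ) (hn : 1 + n₀ = n₁) (h2 : Subsingleton (Ext S.X₂ Y n₀))
    (h3 : Subsingleton (Ext S.X₃ Y n₁)) : Subsingleton (Ext S.X₁ Y n₀) := by
  refine subsingleton_of_forall_eq 0 fun z => ?_
  obtain ⟨x₂, hx₂⟩ := Ext.contravariant_sequence_exact₁ hS Y z hn (Subsingleton.elim _ _)
  rw [← hx₂, Subsingleton.elim x₂ 0, Ext.comp_zero]

end DFDAux

/-- Behaviour of the maxima of non-vanishing degrees of `Ext(−, ∇_λ)` (the `Δ`-filtration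
dimension) in a short exact sequence `0 → A → B → C → 0` of non-zero objects. -/
theorem deltaFiltrationDim_shortExact
    {C : Type u} [Category.{v} C] [Abelian C] [HasExt.{w} C]
    {Λ : Type*} (nabla : Λ → C)
    (S : ShortComplex C) (hS : S.ShortExact)
    (hA : ¬ IsZero S.X₁) (hB : ¬ IsZero S.X₂) (hC : ¬ IsZero S.X₃)
    (a b c : ℕ)
    (ha : IsGreatest {d : ℕ | ∃ l : Λ, Nontrivial (Ext S.X₁ (nabla l) d)} a)
    (hb : IsGreatest {d : ℕ | ∃ l : Λ, Nontrivial (Ext S.X₂ (nabla l) d)} b)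
    (hc : IsGreatest {d : ℕ | ∃ l : Λ, Nontrivial (Ext S.X₃ (nabla l) d)} c) :
    ((a : ℤ) ≤ max (b : ℤ) ((c : ℤ) - 1) ∧ (b ≠ c → (a : ℤ) = max (b : ℤ) ((c : ℤ) - 1))) ∧
    (b ≤ max a c ∧ (c ≠ a + 1 → b = max a c)) ∧
    (c ≤ max b (a + 1) ∧ (a ≠ b → c = max b (a + 1))) := by
  have sub1 : ∀ (l : Λ) (d : ℕ), a < d → Subsingleton (Ext S.X₁ (nabla l) d) := fun l d hd =>
    not_nontrivial_iff_subsingleton.mp fun h => absurd (ha.2 ⟨l, h⟩) (by omega)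
  have sub2 : ∀ (l : Λ) (d : ℕ), b < d → Subsingleton (Ext S.X₂ (nabla l) d) := fun l d hd =>
    not_nontrivial_iff_subsingleton.mp fun h => absurd (hb.2 ⟨l, h⟩) (by omega)
  have sub3 : ∀ (l : Λ) (d : ℕ), c < d → Subsingleton (Ext S.X₃ (nabla l) d) := fun l d hd =>
    not_nontrivial_iff_subsingleton.mp fun h => absurd (hc.2 ⟨l, h⟩) (by omega)
  -- basic inequalities
  have hf1 : a ≤ b ∨ a + 1 ≤ c := by
    by_contra h
    push_neg at h
    obtain ⟨l, hl⟩ := ha.1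
    exact (not_nontrivial_iff_subsingleton.2
      (dfd_lemI hS (nabla l) a (a + 1) (by omega) (sub2 l a (by omega))
        (sub3 l (a + 1) (by omega)))) hl
  have hf2 : b ≤ a ∨ b ≤ c := by
    by_contra h
    push_neg at h
    obtain ⟨l, hl⟩ := hb.1
    exact (not_nontrivial_iff_subsingleton.2
      (dfd_lemA hS (nabla l) b (sub3 l b (by omega)) (sub1 l b (by omega)))) hl
  have hf3 : c ≤ b ∨ c ≤ a + 1 := by
    by_contra h
    push_neg at h
    obtain ⟨l, hl⟩ := hc.1
    exact (not_nontrivial_iff_subsingleton.2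
      (dfd_lemH hS (nabla l) (c - 1) c (by omega) (sub1 l (c - 1) (by omega))
        (sub2 l c (by omega)))) hl
  -- conditional reverse inequalities
  have e1 : c < b → b ≤ a := fun h => by
    obtain ⟨l, hl⟩ := hb.1
    exact ha.2 ⟨l, dfd_lemC hS (nabla l) b (sub3 l b h) hl⟩
  have e2 : b < c → c ≤ a + 1 := fun h => by
    obtain ⟨l, hl⟩ := hc.1
    have := ha.2 ⟨l, dfd_lemF hS (nabla l) (c - 1) c (by omega) (sub2 l c h) hl⟩
    omega
  have e3 : c ≤ a → a ≤ b := fun h => by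
    obtain ⟨l, hl⟩ := ha.1
    exact hb.2 ⟨l, dfd_lemE hS (nabla l) a (a + 1) (by omega) (sub3 l (a + 1) (by omega)) hl⟩
  have e4 : a + 1 < c → c ≤ b := fun h => by
    obtain ⟨l, hl⟩ := hc.1
    exact hb.2 ⟨l, dfd_lemG hS (nabla l) (c - 1) c (by omega) (sub1 l (c - 1) (by omega)) hl⟩
  have e5 : b < a → a + 1 ≤ c := fun h => by
    obtain ⟨l, hl⟩ := ha.1
    exact hc.2 ⟨l, dfd_lemD hS (nabla l) a (a + 1) (by omega) (sub2 l a h) hl⟩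
  have e6 : a < b → b ≤ c := fun h => by
    obtain ⟨l, hl⟩ := hb.1
    exact hc.2 ⟨l, dfd_lemB hS (nabla l) b (sub1 l b h) hl⟩
  refine ⟨⟨by omega, fun h => ?_⟩, ⟨by omega, fun h => ?_⟩, ⟨by omega, fun h => ?_⟩⟩
  · rcases h.lt_or_gt with h' | h'
    · have := e2 h'; omega
    · have := e1 h'; omega
  · rcases Nat.lt_or_ge c (a + 1) with h' | h'
    · have := e3 (by omega); omega
    · have := e4 (by omega); omega
  · rcases h.lt_or_gt with h' | h'
    · have := e6 h'; omega
    · have := e5 h'; omega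
end
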